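/- arXiv:1210.4479 — 4 statements merged into one kernel-verified Lean document; each statement's English description precedes it below -/
import Mathlib

section
/- Let T be a complete first-order theory with monster model U, M a small model, and p a global M-invariant type. If p is not definable over M, then there exists a global type r, finitely satisfiable in M, such that p and r do not commute, i.e., p(x) ⊗ r(y) ≠ r(y) ⊗ p(x). -/
open FirstOrder FirstOrder.Language

namespace Paper

variable {L : Language} {U : Type*} [L.Structure U]

/-- `a` realizes the formula `φ(x; d)` where `d` is a tuple of parameters from `U`. -/
def Rz {γ : Type*} {n : ℕ} (a : γ → U) (φ : L.Formula (γ ⊕ Fin n)) (d : Fin n → U) : Prop :=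
  φ.Realize (Sum.elim a d)

/-- A global type over the monster `U` in variables `γ` : a complete, finitely
satisfiable set of formulas with parameters from `U` (given as explicit tuples). -/
structure GType (L : Language) (U : Type*) [L.Structure U] (γ : Type*) where
  mem : ∀ {n : ℕ}, L.Formula (γ ⊕ Fin n) → (Fin n → U) → Prop
  complete : ∀ {n : ℕ} (φ : L.Formula (γ ⊕ Fin n)) (d : Fin n → U), mem φ d ∨ mem φ.not d
  finSat : ∀ (s : List (Σ n : ℕ, L.Formula (γ ⊕ Fin n) × (Fin n → U))),
    (∀ x ∈ s, mem x.2.1 x.2.2) → ∃ a : γ → U, ∀ x ∈ s, Rz a x.2.1 x.2.2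

/-- `a ≡_A b` : same type over the parameter set `A`. -/
def SameTypeOver (A : Set U) {γ : Type*} (a b : γ → U) : Prop :=
  ∀ {j : ℕ} (ψ : L.Formula (γ ⊕ Fin j)) (e : Fin j → U), (∀ i, e i ∈ A) →
    (Rz a ψ e ↔ Rz b ψ e)

/-- A global type is `A`-invariant. -/
def Invariant (A : Set U) {γ : Type*} (p : GType L U γ) : Prop :=
  ∀ {n : ℕ} (φ : L.Formula (γ ⊕ Fin n)) (d d' : Fin n → U),
    SameTypeOver (L := L) A d d' → (p.mem φ d ↔ p.mem φ d')

/-- A global type is finitely satisfiable in `A` : every formula in it has a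
realization with coordinates from `A`. -/
def FinSatIn (A : Set U) {γ : Type*} (p : GType L U γ) : Prop :=
  ∀ {n : ℕ} (φ : L.Formula (γ ⊕ Fin n)) (d : Fin n → U), p.mem φ d →
    ∃ a : γ → U, (∀ i, a i ∈ A) ∧ Rz a φ d

/-- A global type is definable over `A`. -/
def DefinableOver (A : Set U) {γ : Type*} (p : GType L U γ) : Prop :=
  ∀ {n : ℕ} (φ : L.Formula (γ ⊕ Fin n)), ∃ (j : ℕ) (e : Fin j → U),
    (∀ i, e i ∈ A) ∧ ∃ ψ : L.Formula (Fin n ⊕ Fin j),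
      ∀ d : Fin n → U, (p.mem φ d ↔ ψ.Realize (Sum.elim d e))

/-- `a ⊨ p|_A` : the tuple `a` realizes the restriction of `p` to parameters in `A`. -/
def RealizesOver {γ : Type*} (p : GType L U γ) (a : γ → U) (A : Set U) : Prop :=
  ∀ {n : ℕ} (φ : L.Formula (γ ⊕ Fin n)) (d : Fin n → U), (∀ i, d i ∈ A) →
    p.mem φ d → Rz a φ d

/-- Substitute a tuple of parameters for the second variable block `y` of
`φ(x, y; z)`, producing a formula `φ(x; y⌢z)`. -/
def substY {m k n : ℕ} (φ : L.Formula ((Fin m ⊕ Fin k) ⊕ Fin n)) :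
    L.Formula (Fin m ⊕ Fin (k + n)) :=
  φ.relabel (Sum.elim (Sum.map id (Fin.castAdd n)) (fun j => Sum.inr (Fin.natAdd k j)))

/-- Substitute a tuple of parameters for the first variable block `x` of
`φ(x, y; z)`, producing a formula `φ(y; x⌢z)`. -/
def substX {m k n : ℕ} (φ : L.Formula ((Fin m ⊕ Fin k) ⊕ Fin n)) :
    L.Formula (Fin k ⊕ Fin (m + n)) :=
  φ.relabel (Sum.elim (Sum.elim (fun i => Sum.inr (Fin.castAdd n i)) Sum.inl)
    (fun j => Sum.inr (Fin.natAdd m j)))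

/-- Membership `φ(x,y;d) ∈ p(x) ⊗ q(y)` for an `A`-invariant type `p` :
for any `b ⊨ q|_{A ∪ d}` (in the monster), `φ(x, b; d) ∈ p`. -/
def ProdMem (A : Set U) {m k : ℕ} (p : GType L U (Fin m)) (q : GType L U (Fin k))
    {n : ℕ} (φ : L.Formula ((Fin m ⊕ Fin k) ⊕ Fin n)) (d : Fin n → U) : Prop :=
  ∀ b : Fin k → U, RealizesOver q b (A ∪ Set.range d) → p.mem (substY φ) (Fin.append b d)

/-- Membership `φ(x,y;d) ∈ q(y) ⊗ p(x)` (variables kept in the order `x, y`). -/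
def ProdMemRev (A : Set U) {m k : ℕ} (p : GType L U (Fin m)) (q : GType L U (Fin k))
    {n : ℕ} (φ : L.Formula ((Fin m ⊕ Fin k) ⊕ Fin n)) (d : Fin n → U) : Prop :=
  ∀ a : Fin m → U, RealizesOver p a (A ∪ Set.range d) → q.mem (substX φ) (Fin.append a d)

/-- `p ⊗ q = q ⊗ p` as global types. -/
def Commute (A : Set U) {m k : ℕ} (p : GType L U (Fin m)) (q : GType L U (Fin k)) : Prop :=
  ∀ {n : ℕ} (φ : L.Formula ((Fin m ⊕ Fin k) ⊕ Fin n)) (d : Fin n → U),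
    ProdMem A p q φ d ↔ ProdMemRev A p q φ d

/-- `(p ⊗ q)|_B = (q ⊗ p)|_B` : the products agree on parameters from `B`. -/
def CommuteOn (A B : Set U) {m k : ℕ} (p : GType L U (Fin m)) (q : GType L U (Fin k)) : Prop :=
  ∀ {n : ℕ} (φ : L.Formula ((Fin m ⊕ Fin k) ⊕ Fin n)) (d : Fin n → U), (∀ i, d i ∈ B) →
    (ProdMem A p q φ d ↔ ProdMemRev A p q φ d)

/-- A sequence of `k`-tuples indexed by a linear order is indiscernible over `A`. -/
def IndiscOver (A : Set U) {ι : Type*} [LinearOrder ι] {k : ℕ} (b : ι → Fin k → U) : Prop :=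
  ∀ (j r : ℕ) (ψ : L.Formula ((Fin j × Fin k) ⊕ Fin r)) (e : Fin r → U), (∀ i, e i ∈ A) →
    ∀ f g : Fin j → ι, StrictMono f → StrictMono g →
      (ψ.Realize (Sum.elim (fun v => b (f v.1) v.2) e) ↔
        ψ.Realize (Sum.elim (fun v => b (g v.1) v.2) e))

/-- Two sequences are mutually indiscernible over `A`. -/
def MutIndisc (A : Set U) {k₀ k₁ : ℕ} (I : ℕ → Fin k₀ → U) (J : ℕ → Fin k₁ → U) : Prop :=
  IndiscOver (L := L) (A ∪ ⋃ t, Set.range (J t)) I ∧ IndiscOver (L := L) (A ∪ ⋃ t, Set.range (I t)) J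

/-- The formula `φ(x; d)` divides over `A`. -/
def Divides (A : Set U) {γ : Type*} {n : ℕ} (φ : L.Formula (γ ⊕ Fin n)) (d : Fin n → U) : Prop :=
  ∃ I : ℕ → Fin n → U, I 0 = d ∧ IndiscOver (L := L) A I ∧ ¬ ∃ a : γ → U, ∀ t, Rz a φ (I t)

/-- The formula `φ(x; d)` forks over `A` : it implies a finite disjunction of
formulas dividing over `A`. -/
def Forks (A : Set U) {γ : Type*} {n : ℕ} (φ : L.Formula (γ ⊕ Fin n)) (d : Fin n → U) : Prop :=
  ∃ s : List (Σ m : ℕ, L.Formula (γ ⊕ Fin m) × (Fin m → U)),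
    (∀ x ∈ s, Divides A x.2.1 x.2.2) ∧
    ∀ a : γ → U, Rz a φ d → ∃ x ∈ s, Rz a x.2.1 x.2.2

/-- The (complete theory of the monster) is NIP : no formula has the independence property. -/
def IsNIP (L : Language) (U : Type*) [L.Structure U] : Prop :=
  ∀ (m n : ℕ) (φ : L.Formula (Fin m ⊕ Fin n)),
    ¬ ∃ (a : ℕ → Fin m → U) (b : Finset ℕ → Fin n → U),
      ∀ (i : ℕ) (s : Finset ℕ), (φ.Realize (Sum.elim (a i) (b s)) ↔ i ∈ s)

/-- dp-minimality : every singleton has dp-rank 1. -/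
def IsDpMinimal (L : Language) (U : Type*) [L.Structure U] : Prop :=
  ∀ (A : Set U) (c : U) {k₀ k₁ : ℕ} (I : ℕ → Fin k₀ → U) (J : ℕ → Fin k₁ → U),
    MutIndisc (L := L) A I J →
      IndiscOver (L := L) (A ∪ {c}) I ∨ IndiscOver (L := L) (A ∪ {c}) J

/-- Every type (set of formulas, in `k` free variables, with parameters from `A`)
which is finitely satisfiable in `U` is realized in `U`. -/
def RealizesTypesOver (L : Language) (U : Type*) [L.Structure U] (A : Set U) : Prop :=
  ∀ (k : ℕ) (S : Set (Σ n : ℕ, L.Formula (Fin k ⊕ Fin n) × (Fin n → U))),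
    (∀ x ∈ S, ∀ i, x.2.2 i ∈ A) →
    (∀ s : List (Σ n : ℕ, L.Formula (Fin k ⊕ Fin n) × (Fin n → U)),
      (∀ x ∈ s, x ∈ S) → ∃ a : Fin k → U, ∀ x ∈ s, Rz a x.2.1 x.2.2) →
    ∃ a : Fin k → U, ∀ x ∈ S, Rz a x.2.1 x.2.2

/-- Same, but the realization is found inside the set `N`. -/
def RealizesTypesOverIn (L : Language) (U : Type*) [L.Structure U] (A N : Set U) : Prop :=
  ∀ (k : ℕ) (S : Set (Σ n : ℕ, L.Formula (Fin k ⊕ Fin n) × (Fin n → U))),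
    (∀ x ∈ S, ∀ i, x.2.2 i ∈ A) →
    (∀ s : List (Σ n : ℕ, L.Formula (Fin k ⊕ Fin n) × (Fin n → U)),
      (∀ x ∈ s, x ∈ S) → ∃ a : Fin k → U, ∀ x ∈ s, Rz a x.2.1 x.2.2) →
    ∃ a : Fin k → U, (∀ i, a i ∈ N) ∧ ∀ x ∈ S, Rz a x.2.1 x.2.2

/-- `U` is a monster model relative to the small set `A` : it realizes all types
over `A` together with countably many extra parameters. -/
def Monster (L : Language) (U : Type*) [L.Structure U] (A : Set U) : Prop :=
  ∀ (e : ℕ → U), RealizesTypesOver L U (A ∪ Set.range e)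

/-- `M ≺⁺ N` (as subsets of the monster `U`) : `N` contains `M` and realizes (inside
itself) all types over `M` together with countably many extra parameters from `N`. -/
def SatPair (L : Language) (U : Type*) [L.Structure U] (M N : Set U) : Prop :=
  M ⊆ N ∧ ∀ (e : ℕ → U), (∀ i, e i ∈ N) → RealizesTypesOverIn L U (M ∪ Set.range e) N

end Paper

/-!
Suppose `p` commutes with every global coheir of `M`. Fix `φ(x; y)` and put
`X = {c ∈ Mⁿ | φ(x; c) ∈ p}`. For an ultrafilter `𝒰` on `Mⁿ` with coheir `r`, comparing
`φ(x, y)` in `p ⊗ r` and in `r ⊗ p` gives `φ(x; b) ∈ p ↔ X ∈ 𝒰` for every `b ⊨ r|M`, where by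
invariance the left side depends only on `tp(b/M)`. So whether `X ∈ 𝒰` depends only on which
`M`-definable subsets of `Mⁿ` belong to `𝒰`, and compactness of the Stone space of `Mⁿ` makes `X`
itself `M`-definable, say by `ψ(y; e)`. As `M ≺ U`, every `d` is the limit of an ultrafilter on
`Mⁿ`, hence `φ(x; d) ∈ p ↔ ψ(d; e)`: `p` is definable over `M`.
-/

namespace Ultrafilter

theorem exists_forall_mem_of_infClosed {α : Type*} {𝒮 : Set (Set α)} (hne : 𝒮.Nonempty)
    (hinf : InfClosed 𝒮) (hempty : ∅ ∉ 𝒮) : ∃ 𝒰 : Ultrafilter α, ∀ s ∈ 𝒮, s ∈ 𝒰 := by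
  refine exists_ultrafilter_of_finite_inter_nonempty 𝒮 fun T hT => ?_
  rcases T.eq_empty_or_nonempty with rfl | hT'
  · obtain ⟨s, hs⟩ := hne
    obtain ⟨x, -⟩ := Set.nonempty_iff_ne_empty.2 (ne_of_mem_of_not_mem hs hempty)
    exact ⟨x, by simp⟩
  · rw [← Finset.inf_id_set_eq_sInter]
    exact Set.nonempty_iff_ne_empty.2 <|
      ne_of_mem_of_not_mem (hinf.finsetInf_mem hT' fun s hs => hT hs) hempty

end Ultrafilter

namespace BooleanSubalgebra

variable {α : Type*} (𝒟 : BooleanSubalgebra (Set α)) {X : Set α}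

theorem exists_mem_subset_of_determined
    (hX : ∀ 𝒰 𝒱 : Ultrafilter α, (∀ D ∈ 𝒟, D ∈ 𝒰 ↔ D ∈ 𝒱) → (X ∈ 𝒰 ↔ X ∈ 𝒱))
    {𝒰 : Ultrafilter α} (h𝒰 : X ∈ 𝒰) : ∃ D ∈ 𝒟, D ∈ 𝒰 ∧ D ⊆ X := by
  by_contra! hno
  obtain ⟨𝒱, h𝒱⟩ := Ultrafilter.exists_forall_mem_of_infClosed
    (𝒮 := {S | ∃ D ∈ 𝒟, D ∈ 𝒰 ∧ S = D \ X}) ⟨_, Set.univ, 𝒟.top_mem, Filter.univ_mem, rfl⟩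
    (by
      rintro _ ⟨D₁, hD₁, hD₁𝒰, rfl⟩ _ ⟨D₂, hD₂, hD₂𝒰, rfl⟩
      exact ⟨D₁ ∩ D₂, 𝒟.inf_mem hD₁ hD₂, Filter.inter_mem hD₁𝒰 hD₂𝒰, inf_sdiff.symm⟩)
    (by
      rintro ⟨D, hD, hD𝒰, hDX⟩
      exact hno D hD hD𝒰 (Set.sdiff_eq_empty.1 hDX.symm))
  have h𝒰𝒱 : ∀ D ∈ 𝒟, D ∈ 𝒰 → D ∈ 𝒱 := fun D hD hD𝒰 =>
    Filter.mem_of_superset (h𝒱 _ ⟨D, hD, hD𝒰, rfl⟩) Set.sdiff_subset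
  have hagree : ∀ D ∈ 𝒟, D ∈ 𝒰 ↔ D ∈ 𝒱 := fun D hD =>
    ⟨h𝒰𝒱 D hD, fun hD𝒱 => by_contra fun hD𝒰 =>
      Ultrafilter.compl_mem_iff_notMem.1
        (h𝒰𝒱 Dᶜ (𝒟.compl_mem hD) (Ultrafilter.compl_mem_iff_notMem.2 hD𝒰)) hD𝒱⟩
  have hXc : Xᶜ ∈ 𝒱 := by
    simpa [Set.compl_eq_univ_sdiff] using h𝒱 _ ⟨Set.univ, 𝒟.top_mem, Filter.univ_mem, rfl⟩
  exact Ultrafilter.compl_mem_iff_notMem.1 hXc ((hX 𝒰 𝒱 hagree).1 h𝒰)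

theorem mem_of_determined
    (hX : ∀ 𝒰 𝒱 : Ultrafilter α, (∀ D ∈ 𝒟, D ∈ 𝒰 ↔ D ∈ 𝒱) → (X ∈ 𝒰 ↔ X ∈ 𝒱)) : X ∈ 𝒟 := by
  classical
  have hcover : ∀ 𝒰 : Ultrafilter α, ∃ D ∈ 𝒟, D ∈ 𝒰 ∧ (D ⊆ X ∨ D ⊆ Xᶜ) := by
    intro 𝒰
    by_cases h : X ∈ 𝒰
    · obtain ⟨D, hD, hD𝒰, hDX⟩ := exists_mem_subset_of_determined 𝒟 hX h
      exact ⟨D, hD, hD𝒰, .inl hDX⟩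
    · have hXc : ∀ 𝒰 𝒱 : Ultrafilter α, (∀ D ∈ 𝒟, D ∈ 𝒰 ↔ D ∈ 𝒱) → (Xᶜ ∈ 𝒰 ↔ Xᶜ ∈ 𝒱) :=
        fun 𝒰 𝒱 h => by simp only [Ultrafilter.compl_mem_iff_notMem, hX 𝒰 𝒱 h]
      obtain ⟨D, hD, hD𝒰, hDX⟩ :=
        exists_mem_subset_of_determined 𝒟 hXc (Ultrafilter.compl_mem_iff_notMem.2 h)
      exact ⟨D, hD, hD𝒰, .inr hDX⟩
  obtain ⟨t, ht⟩ := isCompact_univ.elim_finite_subcover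
    (fun D : {D // D ∈ 𝒟 ∧ (D ⊆ X ∨ D ⊆ Xᶜ)} => {𝒰 : Ultrafilter α | D.1 ∈ 𝒰})
    (fun _ => ultrafilter_isOpen_basic _)
    (fun 𝒰 _ => by
      obtain ⟨D, hD, hD𝒰, hDX⟩ := hcover 𝒰
      exact Set.mem_iUnion.2 ⟨⟨D, hD, hDX⟩, hD𝒰⟩)
  have hXeq : X = (t.filter fun D => D.1 ⊆ X).sup Subtype.val := by
    rw [Finset.sup_set_eq_biUnion]
    ext x
    simp only [Finset.mem_filter, Set.mem_iUnion, exists_prop]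
    constructor
    · intro hx
      obtain ⟨D, hDt, hxD⟩ : ∃ D ∈ t, x ∈ D.1 := by simpa using ht (Set.mem_univ (pure x))
      exact ⟨D, ⟨hDt, D.2.2.resolve_right fun h => h hxD hx⟩, hxD⟩
    · rintro ⟨D, ⟨-, hDX⟩, hxD⟩
      exact hDX hxD
  rw [hXeq]
  exact Finset.sup_induction 𝒟.bot_mem (fun _ h₁ _ h₂ => 𝒟.sup_mem h₁ h₂) fun D _ => D.2.1

end BooleanSubalgebra

namespace Paper

variable {L : Language} {U : Type*} [L.Structure U]

theorem rz_not {γ : Type*} {n : ℕ} {a : γ → U} {φ : L.Formula (γ ⊕ Fin n)} {d : Fin n → U} :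
    Rz a φ.not d ↔ ¬ Rz a φ d :=
  Formula.realize_not

theorem exists_common_params {γ : Type*} {A : Set U} {j₁ j₂ : ℕ}
    (ψ₁ : L.Formula (γ ⊕ Fin j₁)) {e₁ : Fin j₁ → U} (he₁ : ∀ i, e₁ i ∈ A)
    (ψ₂ : L.Formula (γ ⊕ Fin j₂)) {e₂ : Fin j₂ → U} (he₂ : ∀ i, e₂ i ∈ A) :
    ∃ (j : ℕ) (e : Fin j → U) (χ₁ χ₂ : L.Formula (γ ⊕ Fin j)), (∀ i, e i ∈ A) ∧
      (∀ a, Rz a χ₁ e ↔ Rz a ψ₁ e₁) ∧ (∀ a, Rz a χ₂ e ↔ Rz a ψ₂ e₂) := by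
  refine ⟨j₁ + j₂, Fin.append e₁ e₂, ψ₁.relabel (Sum.map id (Fin.castAdd j₂)),
    ψ₂.relabel (Sum.map id (Fin.natAdd j₁)), Fin.addCases (by simpa using he₁) (by simpa using he₂),
    fun a => ?_, fun a => ?_⟩
  all_goals
    simp only [Rz, Formula.realize_relabel]
    congr!
    ext (i | i) <;> simp

namespace GType

variable {γ : Type*} (q : GType L U γ)

theorem mem_of_imp {n n' : ℕ} {φ : L.Formula (γ ⊕ Fin n)} {d : Fin n → U}
    {ψ : L.Formula (γ ⊕ Fin n')} {e : Fin n' → U} (h : ∀ a, Rz a φ d → Rz a ψ e)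
    (hφ : q.mem φ d) : q.mem ψ e := by
  refine (q.complete ψ e).resolve_right fun hψ => ?_
  obtain ⟨a, ha⟩ := q.finSat [⟨n, φ, d⟩, ⟨n', ψ.not, e⟩] (by simp [hφ, hψ])
  exact rz_not.1 (ha ⟨n', ψ.not, e⟩ (by simp)) (h a (ha ⟨n, φ, d⟩ (by simp)))

theorem mem_congr {n n' : ℕ} {φ : L.Formula (γ ⊕ Fin n)} {d : Fin n → U}
    {ψ : L.Formula (γ ⊕ Fin n')} {e : Fin n' → U} (h : ∀ a, Rz a φ d ↔ Rz a ψ e) :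
    q.mem φ d ↔ q.mem ψ e :=
  ⟨q.mem_of_imp fun a => (h a).1, q.mem_of_imp fun a => (h a).2⟩

end GType

namespace RealizesOver

variable {γ : Type*} {q : GType L U γ} {A : Set U} {a : γ → U}

theorem rz_iff_mem (ha : RealizesOver q a A) {n : ℕ} (φ : L.Formula (γ ⊕ Fin n))
    {d : Fin n → U} (hd : ∀ i, d i ∈ A) : Rz a φ d ↔ q.mem φ d :=
  ⟨fun h => (q.complete φ d).resolve_right fun hn => rz_not.1 (ha φ.not d hd hn) h, ha φ d hd⟩

theorem sameTypeOver {b : γ → U} (ha : RealizesOver q a A) (hb : RealizesOver q b A) :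
    SameTypeOver (L := L) A a b := fun ψ _ he => by
  rw [ha.rz_iff_mem ψ he, hb.rz_iff_mem ψ he]

end RealizesOver

theorem realizesOver_union_range_elim0 {γ : Type*} {q : GType L U γ} {A : Set U}
    {a : γ → U} :
    RealizesOver q a (A ∪ Set.range (Fin.elim0 : Fin 0 → U)) ↔ RealizesOver q a A := by
  rw [Set.range_eq_empty, Set.union_empty]

theorem Monster.exists_realizesOver [Nonempty U] {A : Set U} (hmon : Monster L U A) {k : ℕ}
    (q : GType L U (Fin k)) : ∃ b : Fin k → U, RealizesOver q b A := by
  obtain ⟨b, hb⟩ := hmon (fun _ => Classical.arbitrary U) k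
    {x | (∀ i, x.2.2 i ∈ A) ∧ q.mem x.2.1 x.2.2} (fun _ hx i => .inl (hx.1 i))
    (fun s hs => q.finSat s fun x hx => (hs x hx).2)
  exact ⟨b, fun φ d hd hφ => hb ⟨_, φ, d⟩ ⟨hd, hφ⟩⟩

section Products

variable {m k : ℕ} (A : Set U) (p : GType L U (Fin m)) (q : GType L U (Fin k))
  (φ : L.Formula (Fin m ⊕ Fin k))

theorem prodMem_relabel_inl_iff :
    ProdMem A p q (φ.relabel Sum.inl) Fin.elim0 ↔ ∀ b, RealizesOver q b A → p.mem φ b := by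
  refine forall_congr' fun b => ?_
  rw [realizesOver_union_range_elim0]
  refine imp_congr_right fun _ => p.mem_congr fun a => ?_
  simp only [Rz, substY, Formula.realize_relabel]
  congr!
  ext (i | i) <;> simp

theorem prodMemRev_relabel_inl_iff :
    ProdMemRev A p q (φ.relabel Sum.inl) Fin.elim0 ↔
      ∀ a, RealizesOver p a A → q.mem (φ.relabel Sum.swap) a := by
  refine forall_congr' fun a => ?_
  rw [realizesOver_union_range_elim0]
  refine imp_congr_right fun _ => q.mem_congr fun b => ?_
  simp only [Rz, substX, Formula.realize_relabel]
  congr!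
  ext (i | i) <;> simp

end Products

section DefinableSets

variable (A : Set U) {n : ℕ}

def realizeSet {j : ℕ} (ψ : L.Formula (Fin n ⊕ Fin j)) (e : Fin j → U) : Set (Fin n → A) :=
  {b | Rz (fun i => (b i : U)) ψ e}

theorem realizeSet_not {j : ℕ} (ψ : L.Formula (Fin n ⊕ Fin j)) (e : Fin j → U) :
    realizeSet A ψ.not e = (realizeSet A ψ e)ᶜ := by
  ext b; exact rz_not

theorem realizeSet_inf {j : ℕ} (ψ₁ ψ₂ : L.Formula (Fin n ⊕ Fin j)) (e : Fin j → U) :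
    realizeSet A (ψ₁ ⊓ ψ₂) e = realizeSet A ψ₁ e ∩ realizeSet A ψ₂ e := by
  ext b; exact Formula.realize_inf

theorem realizeSet_congr {j j' : ℕ} {ψ : L.Formula (Fin n ⊕ Fin j)} {e : Fin j → U}
    {ψ' : L.Formula (Fin n ⊕ Fin j')} {e' : Fin j' → U} (h : ∀ a, Rz a ψ e ↔ Rz a ψ' e') :
    realizeSet A ψ e = realizeSet A ψ' e' := by
  ext b; exact h _

theorem exists_realizeSet_inter {j₁ j₂ : ℕ} (ψ₁ : L.Formula (Fin n ⊕ Fin j₁)) {e₁ : Fin j₁ → U}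
    (he₁ : ∀ i, e₁ i ∈ A) (ψ₂ : L.Formula (Fin n ⊕ Fin j₂)) {e₂ : Fin j₂ → U}
    (he₂ : ∀ i, e₂ i ∈ A) :
    ∃ (j : ℕ) (ψ : L.Formula (Fin n ⊕ Fin j)) (e : Fin j → U), (∀ i, e i ∈ A) ∧
      (∀ a, Rz a ψ e ↔ Rz a ψ₁ e₁ ∧ Rz a ψ₂ e₂) ∧
      realizeSet A ψ e = realizeSet A ψ₁ e₁ ∩ realizeSet A ψ₂ e₂ := by
  obtain ⟨j, e, χ₁, χ₂, he, h₁, h₂⟩ := exists_common_params ψ₁ he₁ ψ₂ he₂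
  refine ⟨j, χ₁ ⊓ χ₂, e, he, fun a => ?_, ?_⟩
  · exact Formula.realize_inf.trans (and_congr (h₁ a) (h₂ a))
  · rw [realizeSet_inf, realizeSet_congr A h₁, realizeSet_congr A h₂]

variable (L) (n) in
def definableSets : BooleanSubalgebra (Set (Fin n → A)) where
  carrier := {S | ∃ (j : ℕ) (ψ : L.Formula (Fin n ⊕ Fin j)) (e : Fin j → U),
    (∀ i, e i ∈ A) ∧ S = realizeSet A ψ e}
  infClosed' := by
    rintro _ ⟨j₁, ψ₁, e₁, he₁, rfl⟩ _ ⟨j₂, ψ₂, e₂, he₂, rfl⟩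
    obtain ⟨j, ψ, e, he, -, hψ⟩ := exists_realizeSet_inter A ψ₁ he₁ ψ₂ he₂
    exact ⟨j, ψ, e, he, hψ.symm⟩
  supClosed' := by
    rintro _ ⟨j₁, ψ₁, e₁, he₁, rfl⟩ _ ⟨j₂, ψ₂, e₂, he₂, rfl⟩
    obtain ⟨j, ψ, e, he, -, hψ⟩ := exists_realizeSet_inter A ψ₁.not he₁ ψ₂.not he₂
    refine ⟨j, ψ.not, e, he, ?_⟩
    rw [realizeSet_not, hψ, realizeSet_not, realizeSet_not, Set.compl_inter, compl_compl,
      compl_compl]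
    rfl
  compl_mem' := by
    rintro _ ⟨j, ψ, e, he, rfl⟩
    exact ⟨j, ψ.not, e, he, (realizeSet_not A ψ e).symm⟩
  bot_mem' := ⟨0, ⊥, Fin.elim0, finZeroElim, by ext; simp [realizeSet, Rz]⟩

theorem realizeSet_mem_definableSets {j : ℕ} (ψ : L.Formula (Fin n ⊕ Fin j)) {e : Fin j → U}
    (he : ∀ i, e i ∈ A) : realizeSet A ψ e ∈ definableSets L A n :=
  ⟨j, ψ, e, he, rfl⟩

end DefinableSets

section Coheirs

variable {A : Set U} {n : ℕ}

variable (L) in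
def coheir (𝒰 : Ultrafilter (Fin n → A)) : GType L U (Fin n) where
  mem ψ e := realizeSet A ψ e ∈ 𝒰
  complete ψ e := by
    rw [realizeSet_not, Ultrafilter.compl_mem_iff_notMem]
    exact em _
  finSat s hs := by
    obtain ⟨b, hb⟩ := Ultrafilter.nonempty_of_mem ((Filter.biInter_mem s.finite_toSet).2 hs)
    exact ⟨fun i => b i, fun x hx => Set.mem_iInter₂.1 hb x hx⟩

theorem finSatIn_coheir (𝒰 : Ultrafilter (Fin n → A)) : FinSatIn A (coheir L 𝒰) := fun _ _ h =>
  let ⟨b, hb⟩ := Ultrafilter.nonempty_of_mem h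
  ⟨fun i => b i, fun i => (b i).2, hb⟩

theorem realizesOver_coheir_of_agree {𝒰 𝒱 : Ultrafilter (Fin n → A)}
    (h : ∀ D ∈ definableSets L A n, D ∈ 𝒰 ↔ D ∈ 𝒱) {b : Fin n → U}
    (hb : RealizesOver (coheir L 𝒰) b A) : RealizesOver (coheir L 𝒱) b A :=
  fun ψ _ he h𝒱 => hb ψ _ he ((h _ (realizeSet_mem_definableSets A ψ he)).2 h𝒱)

theorem coheir_mem_relabel_swap_iff {m : ℕ} {p : GType L U (Fin m)} {a : Fin m → U}
    (ha : RealizesOver p a A) (𝒰 : Ultrafilter (Fin n → A)) (φ : L.Formula (Fin m ⊕ Fin n)) :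
    (coheir L 𝒰).mem (φ.relabel Sum.swap) a ↔ {c : Fin n → A | p.mem φ fun i => c i} ∈ 𝒰 := by
  refine Iff.of_eq (congrArg (· ∈ 𝒰) (Set.ext fun c => ?_))
  refine Iff.trans ?_ (ha.rz_iff_mem φ fun i => (c i).2)
  simp only [realizeSet, Set.mem_ofPred_eq, Rz, Formula.realize_relabel]
  congr!
  ext (i | i) <;> rfl

end Coheirs

theorem realizeSet_nonempty_of_rz (M : L.ElementarySubstructure U) {n j : ℕ}
    (ψ : L.Formula (Fin n ⊕ Fin j)) {e : Fin j → U} (he : ∀ i, e i ∈ M) {d : Fin n → U}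
    (hd : Rz d ψ e) : (realizeSet (M : Set U) ψ e).Nonempty := by
  let eM : Fin j → M := fun i => ⟨e i, he i⟩
  let σ : L.Formula (Fin j) := (ψ.relabel (Sum.elim Sum.inr Sum.inl)).iExs (Fin n)
  have hσ : σ.Realize (M.subtype ∘ eM) := Formula.realize_iExs.2 ⟨d, by
    rw [Formula.realize_relabel]
    exact (congrArg ψ.Realize (by ext (i | i) <;> rfl)).mpr hd⟩
  obtain ⟨b, hb⟩ := Formula.realize_iExs.1 ((M.subtype.map_formula σ eM).1 hσ)
  refine ⟨b, ?_⟩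
  have hbU := (M.subtype.map_formula _ _).2 hb
  rw [Formula.realize_relabel] at hbU
  exact (congrArg ψ.Realize (by ext (i | i) <;> rfl)).mp hbU

theorem exists_ultrafilter_realizesOver_coheir (M : L.ElementarySubstructure U) {n : ℕ}
    (d : Fin n → U) :
    ∃ 𝒰 : Ultrafilter (Fin n → (M : Set U)), RealizesOver (coheir L 𝒰) d M := by
  obtain ⟨𝒰, h𝒰⟩ := Ultrafilter.exists_forall_mem_of_infClosed
    (𝒮 := {S | ∃ (j : ℕ) (ψ : L.Formula (Fin n ⊕ Fin j)) (e : Fin j → U),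
      (∀ i, e i ∈ M) ∧ Rz d ψ e ∧ S = realizeSet (M : Set U) ψ e})
    ⟨_, 0, ⊤, Fin.elim0, finZeroElim, Formula.realize_top.2 trivial, rfl⟩
    (by
      rintro _ ⟨j₁, ψ₁, e₁, he₁, hd₁, rfl⟩ _ ⟨j₂, ψ₂, e₂, he₂, hd₂, rfl⟩
      obtain ⟨j, ψ, e, he, hψ, hset⟩ := exists_realizeSet_inter _ ψ₁ he₁ ψ₂ he₂
      exact ⟨j, ψ, e, he, (hψ d).2 ⟨hd₁, hd₂⟩, hset.symm⟩)
    (by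
      rintro ⟨j, ψ, e, he, hd, hempty⟩
      exact (realizeSet_nonempty_of_rz M ψ he hd).ne_empty hempty.symm)
  refine ⟨𝒰, fun ψ e he hψ => by_contra fun hn => ?_⟩
  have hnot := h𝒰 _ ⟨_, ψ.not, e, he, rz_not.2 hn, rfl⟩
  rw [realizeSet_not] at hnot
  exact Ultrafilter.compl_mem_iff_notMem.1 hnot hψ

section Commuting

variable {A : Set U} {m n : ℕ} {p : GType L U (Fin m)}

theorem mem_iff_mem_ultrafilter_of_commute (hinv : Invariant A p) {a : Fin m → U}
    (ha : RealizesOver p a A) {𝒰 : Ultrafilter (Fin n → A)}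
    (hcomm : Commute A p (coheir L 𝒰)) {b : Fin n → U} (hb : RealizesOver (coheir L 𝒰) b A)
    (φ : L.Formula (Fin m ⊕ Fin n)) :
    p.mem φ b ↔ {c : Fin n → A | p.mem φ fun i => c i} ∈ 𝒰 := by
  have h := hcomm (φ.relabel Sum.inl) Fin.elim0
  rw [prodMem_relabel_inl_iff, prodMemRev_relabel_inl_iff] at h
  constructor
  · intro hφ
    have := h.1 fun b' hb' => (hinv φ b b' (hb.sameTypeOver hb')).1 hφ
    exact (coheir_mem_relabel_swap_iff ha 𝒰 φ).1 (this a ha)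
  · intro hX
    exact h.2 (fun a' ha' => (coheir_mem_relabel_swap_iff ha' 𝒰 φ).2 hX) b hb

theorem mem_definableSets_of_commute [Nonempty U] (hmon : Monster L U A) (hinv : Invariant A p)
    (hcomm : ∀ 𝒰 : Ultrafilter (Fin n → A), Commute A p (coheir L 𝒰))
    (φ : L.Formula (Fin m ⊕ Fin n)) :
    {c : Fin n → A | p.mem φ fun i => c i} ∈ definableSets L A n := by
  obtain ⟨a, ha⟩ := hmon.exists_realizesOver p
  refine BooleanSubalgebra.mem_of_determined _ fun 𝒰 𝒱 hagree => ?_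
  obtain ⟨b, hb⟩ := hmon.exists_realizesOver (coheir L 𝒰)
  rw [← mem_iff_mem_ultrafilter_of_commute hinv ha (hcomm 𝒰) hb,
    mem_iff_mem_ultrafilter_of_commute hinv ha (hcomm 𝒱) (realizesOver_coheir_of_agree hagree hb)]

theorem definableOver_of_commute [Nonempty U] (M : L.ElementarySubstructure U)
    (hmon : Monster L U M) (hinv : Invariant M p)
    (hcomm : ∀ n (𝒰 : Ultrafilter (Fin n → (M : Set U))), Commute M p (coheir L 𝒰)) :
    DefinableOver M p := by
  intro n φ
  obtain ⟨a, ha⟩ := hmon.exists_realizesOver p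
  obtain ⟨j, ψ, e, he, hψ⟩ := mem_definableSets_of_commute hmon hinv (hcomm n) φ
  refine ⟨j, e, he, ψ, fun d => ?_⟩
  obtain ⟨𝒰, hd⟩ := exists_ultrafilter_realizesOver_coheir M d
  rw [mem_iff_mem_ultrafilter_of_commute hinv ha (hcomm n 𝒰) hd, hψ]
  exact (hd.rz_iff_mem ψ he).symm

end Commuting

theorem definableOver_of_isEmpty [IsEmpty U] (A : Set U) {γ : Type*} (p : GType L U γ) :
    DefinableOver A p := by
  classical
  intro n φ
  rcases n with _ | n
  · refine ⟨0, Fin.elim0, finZeroElim, if p.mem φ Fin.elim0 then ⊤ else ⊥, fun d => ?_⟩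
    rw [Subsingleton.elim d Fin.elim0]
    split_ifs <;> simp [*]
  · exact ⟨0, Fin.elim0, finZeroElim, ⊤, fun d => isEmptyElim (d 0)⟩

end Paper

open Paper in
/-- If a global `M`-invariant type `p` (over the monster `U`, `M` a small
model) is not definable over `M`, then there is a global type `r` finitely satisfiable
in `M` which does not commute with `p`. -/
theorem stmt_0 {L : Language} {U : Type*} [L.Structure U]
    (M : L.ElementarySubstructure U) (hmon : Monster L U (M : Set U))
    {m : ℕ} (p : GType L U (Fin m)) (hinv : Invariant (M : Set U) p)
    (hnotdef : ¬ DefinableOver (M : Set U) p) :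
    ∃ (k : ℕ) (r : GType L U (Fin k)), FinSatIn (M : Set U) r ∧
      ¬ Commute (M : Set U) p r := by
  by_contra! hcomm
  refine hnotdef ?_
  cases isEmpty_or_nonempty U
  · exact definableOver_of_isEmpty _ p
  · exact definableOver_of_commute M hmon hinv fun n 𝒰 => hcomm n _ (finSatIn_coheir 𝒰)
end

section
/- Let φ(x;y) be an NIP formula with alternation number n = alt(φ). If (b_i : i < ω) is an indiscernible sequence and the set {φ(x;b_i) : i < n/2 + 1} is consistent, then the set {φ(x;b_i) : i < ω} is consistent. -/
open FirstOrder FirstOrder.Language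

namespace Paper

variable {L : Language} {U : Type*} [L.Structure U]

/-- There is an indiscernible sequence and a tuple alternating on `φ` at least `n` times. -/
def AltBounded {m k : ℕ} (φ : L.Formula (Fin m ⊕ Fin k)) (n : ℕ) : Prop :=
  ∃ (I : ℕ → Fin k → U) (a : Fin m → U), IndiscOver (L := L) (∅ : Set U) I ∧
    ∀ i < n, ¬ (Rz a φ (I i) ↔ Rz a φ (I (i + 1)))

/-- `n` is the alternation number of the (NIP) formula `φ` : `n` alternations occur on
some indiscernible sequence, but not `n + 1`. -/
def IsAltNum {m k : ℕ} (φ : L.Formula (Fin m ⊕ Fin k)) (n : ℕ) : Prop :=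
  AltBounded (U := U) φ n ∧ ¬ AltBounded (U := U) φ (n + 1)

end Paper

/-!
If `{φ(x; bᵢ) : i < N}` is consistent but `{φ(x; bᵢ) : i ≤ N}` is not, indiscernibility gives
`a` satisfying `φ(x; b_{2i+1})` for all `i < N`; inserting any `b_{2t}`, `t ≤ N`, into this
increasing tuple would again give an increasing `(N + 1)`-tuple, so `a` fails `φ(x; b_{2t})`.
Thus `a` alternates `2N` times along `b`, which forces `2N ≤ alt(φ)`. Hence consistency
propagates from `n / 2 + 1` instances to all finitely many, and saturation finishes.
-/

namespace Paper

variable {L : Language} {U : Type*} [L.Structure U] {m k : ℕ}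

/-- The formula `∃ x, ⋀_{i < N} φ(x; yᵢ)` in the variables `(yᵢ)_{i < N}`, in the shape
required by `IndiscOver`. -/
noncomputable def existsConjInstances (φ : L.Formula (Fin m ⊕ Fin k)) (N : ℕ) :
    L.Formula ((Fin N × Fin k) ⊕ Fin 0) :=
  Formula.iExs (Fin m) <|
    Formula.relabel (Sum.elim Sum.inr fun v => Sum.inl (Sum.inl v))
      (BoundedFormula.iInf fun i : Fin N => φ.relabel (Sum.map id fun j => (i, j)))

theorem realize_existsConjInstances (φ : L.Formula (Fin m ⊕ Fin k)) (N : ℕ)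
    (w : (Fin N × Fin k) ⊕ Fin 0 → U) :
    (existsConjInstances φ N).Realize w ↔
      ∃ a : Fin m → U, ∀ i : Fin N, Rz a φ fun j => w (Sum.inl (i, j)) := by
  simp only [existsConjInstances, Formula.realize_iExs, Formula.realize_relabel, Rz]
  refine exists_congr fun a => ?_
  rw [Formula.Realize, BoundedFormula.realize_iInf]
  refine forall_congr' fun i => ?_
  rw [← Formula.Realize, Formula.realize_relabel]
  congr! 1
  ext (_ | _) <;> rfl

theorem IndiscOver.exists_forall_rz_comp_iff {φ : L.Formula (Fin m ⊕ Fin k)}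
    {b : ℕ → Fin k → U} (hb : IndiscOver (L := L) (∅ : Set U) b) {N : ℕ} {f g : Fin N → ℕ}
    (hf : StrictMono f) (hg : StrictMono g) :
    (∃ a : Fin m → U, ∀ i, Rz a φ (b (f i))) ↔ ∃ a : Fin m → U, ∀ i, Rz a φ (b (g i)) := by
  simpa only [realize_existsConjInstances, Sum.elim_inl] using
    hb N 0 (existsConjInstances φ N) Fin.elim0 Fin.elim0 f g hf hg

theorem not_iff_succ_of_odd_of_not_even {P : ℕ → Prop} {N : ℕ}
    (hodd : ∀ t < N, P (2 * t + 1)) (heven : ∀ t ≤ N, ¬ P (2 * t)) :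
    ∀ i < 2 * N, ¬ (P i ↔ P (i + 1)) := by
  intro i hi
  obtain ⟨t, rfl | rfl⟩ := Nat.even_or_odd' i
  · exact fun h => heven t (by omega) (h.mpr (hodd t (by omega)))
  · exact fun h => heven (t + 1) (by omega) (h.mp (hodd t (by omega)))

theorem AltBounded.mono {φ : L.Formula (Fin m ⊕ Fin k)} {n n' : ℕ}
    (h : AltBounded (U := U) φ n) (hn : n' ≤ n) : AltBounded (U := U) φ n' :=
  let ⟨I, a, hI, halt⟩ := h
  ⟨I, a, hI, fun i hi => halt i (hi.trans_le hn)⟩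

theorem IndiscOver.altBounded_of_consistent_of_not_consistent_succ
    {φ : L.Formula (Fin m ⊕ Fin k)} {b : ℕ → Fin k → U}
    (hb : IndiscOver (L := L) (∅ : Set U) b) {N : ℕ}
    (hN : ∃ a : Fin m → U, ∀ i < N, Rz a φ (b i))
    (hN₁ : ¬ ∃ a : Fin m → U, ∀ i < N + 1, Rz a φ (b i)) :
    AltBounded (U := U) φ (2 * N) := by
  obtain ⟨a, hodd⟩ : ∃ a : Fin m → U, ∀ i : Fin N, Rz a φ (b (2 * i + 1)) := by
    refine (hb.exists_forall_rz_comp_iff (fun i j hij => ?_) Fin.val_strictMono).mpr ?_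
    · simp only [Fin.lt_def] at hij ⊢; omega
    · obtain ⟨a, ha⟩ := hN
      exact ⟨a, fun i => ha i i.2⟩
  refine ⟨b, a, hb, not_iff_succ_of_odd_of_not_even (fun t ht => hodd ⟨t, ht⟩) ?_⟩
  intro t ht heven
  -- `b (2 * t)` together with the `b (2 * i + 1)` is an increasing `(N + 1)`-tuple realized by `a`
  let f : Fin (N + 1) → ℕ := fun i =>
    if (i : ℕ) < t then 2 * i + 1 else if (i : ℕ) = t then 2 * t else 2 * i - 1
  have hf : StrictMono f := fun i j hij => by
    simp only [f, Fin.lt_def] at hij ⊢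
    split_ifs <;> omega
  obtain ⟨a', ha'⟩ := (hb.exists_forall_rz_comp_iff hf Fin.val_strictMono).mp ⟨a, fun i => by
    simp only [f]
    split_ifs with hlt heq
    · exact hodd ⟨i, by omega⟩
    · exact heven
    · simpa [show 2 * (i : ℕ) - 1 = 2 * (i - 1 : ℕ) + 1 by omega] using
        hodd ⟨i - 1, by omega⟩⟩
  exact hN₁ ⟨a', fun i hi => ha' ⟨i, hi⟩⟩

theorem RealizesTypesOver.exists_forall_rz {φ : L.Formula (Fin m ⊕ Fin k)}
    {b : ℕ → Fin k → U} (hsat : RealizesTypesOver L U (⋃ i, Set.range (b i)))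
    (hfin : ∀ N, ∃ a : Fin m → U, ∀ i < N, Rz a φ (b i)) :
    ∃ a : Fin m → U, ∀ i, Rz a φ (b i) := by
  let inst : ℕ → Σ r : ℕ, L.Formula (Fin m ⊕ Fin r) × (Fin r → U) := fun i => ⟨k, (φ, b i)⟩
  obtain ⟨a, ha⟩ := hsat m (Set.range inst)
    (by rintro _ ⟨i, rfl⟩ j; exact Set.mem_iUnion.mpr ⟨i, j, rfl⟩)
    (fun s hs => by
      choose idx hidx using hs
      obtain ⟨a, ha⟩ := hfin ((s.attach.map fun x => idx x.1 x.2).sum + 1)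
      refine ⟨a, fun x hx => ?_⟩
      rw [← hidx x hx]
      exact ha _ (Nat.lt_succ_of_le (List.le_sum_of_mem
        (List.mem_map.mpr ⟨⟨x, hx⟩, List.mem_attach _ _, rfl⟩))))
  exact ⟨a, fun i => ha _ ⟨i, rfl⟩⟩

end Paper

open Paper in
theorem stmt_5_general {L : Language} {U : Type*} [L.Structure U]
    {m k : ℕ} (φ : L.Formula (Fin m ⊕ Fin k)) (n : ℕ)
    (halt : IsAltNum (U := U) φ n)
    (b : ℕ → Fin k → U) (hb : IndiscOver (L := L) (∅ : Set U) b)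
    (hsat : RealizesTypesOver L U (⋃ i, Set.range (b i)))
    (hcons : ∃ a : Fin m → U, ∀ i < n / 2 + 1, Rz a φ (b i)) :
    ∃ a : Fin m → U, ∀ i : ℕ, Rz a φ (b i) := by
  have hstep : ∀ N, n / 2 + 1 ≤ N → (∃ a : Fin m → U, ∀ i < N, Rz a φ (b i)) →
      ∃ a : Fin m → U, ∀ i < N + 1, Rz a φ (b i) := fun N hN hcons =>
    by_contra fun hnot => halt.2 <|
      (hb.altBounded_of_consistent_of_not_consistent_succ hcons hnot).mono (by omega)
  refine hsat.exists_forall_rz fun N => ?_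
  obtain ⟨a, ha⟩ := Nat.le_induction (P := fun N _ => ∃ a : Fin m → U, ∀ i < N, Rz a φ (b i))
    hcons hstep (max N (n / 2 + 1)) (le_max_right _ _)
  exact ⟨a, fun i hi => ha i (hi.trans_le (le_max_left _ _))⟩

open Paper in
/-- Let `φ(x;y)` be an NIP formula with alternation number `n = alt(φ)`.
If `(b_i : i < ω)` is indiscernible and `{φ(x;b_i) : i < n/2 + 1}` is consistent,
then `{φ(x;b_i) : i < ω}` is consistent. -/
theorem stmt_5 {L : Language} {U : Type*} [L.Structure U]
    {m k : ℕ} (φ : L.Formula (Fin m ⊕ Fin k)) (n : ℕ)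
    (hNIP : ¬ ∃ (a : ℕ → Fin m → U) (c : Finset ℕ → Fin k → U),
      ∀ (i : ℕ) (s : Finset ℕ), (φ.Realize (Sum.elim (a i) (c s)) ↔ i ∈ s))
    (halt : IsAltNum (U := U) φ n)
    (b : ℕ → Fin k → U) (hb : IndiscOver (L := L) (∅ : Set U) b)
    (hsat : RealizesTypesOver L U (⋃ i, Set.range (b i)))
    (hcons : ∃ a : Fin m → U, ∀ i < n / 2 + 1, Rz a φ (b i)) :
    ∃ a : Fin m → U, ∀ i : ℕ, Rz a φ (b i) :=
  stmt_5_general φ n halt b hb hsat hcons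
end

section
/- Let T be any complete theory, A a set of parameters, and p(x) a global type definable over acl(A) (the algebraic closure of A, in T^eq if necessary). Then the restriction p|_A is definable over A. -/
/-!
Let `ψ(y; e)` define `φ(x; y) ∈ p`, with `e` algebraic over `A`. Among the finite `A`-definable
sets containing `e` a minimal one, `s₀`, lies inside every `A`-definable set containing `e`: it
isolates `tp(e/A)`. For `d` from `A` the set `{w | ¬ψ(d; w)}` is `A`-definable, so `ψ(d; e)` holds
iff `∃ w ∈ s₀, ψ(d; w)`, a formula in `d` over the parameters defining `s₀`.
-/

open FirstOrder FirstOrder.Language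

namespace Paper

variable {L : Language} {U : Type*} [L.Structure U]

/-- `c` is algebraic over `A` : it satisfies a formula with parameters in `A` having
only finitely many solutions. -/
def InAcl (L : Language) {U : Type*} [L.Structure U] (A : Set U) (c : U) : Prop :=
  ∃ (n : ℕ) (φ : L.Formula (Fin 1 ⊕ Fin n)) (e : Fin n → U), (∀ i, e i ∈ A) ∧
    Rz (fun _ => c) φ e ∧ {x : U | Rz (L := L) (fun _ => x) φ e}.Finite

end Paper

namespace Paper

def DefinableSetOver (L : Language) {U : Type*} [L.Structure U] (A : Set U) {α : Type*}
    (s : Set (α → U)) : Prop :=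
  ∃ (r : ℕ) (θ : L.Formula (α ⊕ Fin r)) (e : Fin r → U),
    (∀ i, e i ∈ A) ∧ s = {z | θ.Realize (Sum.elim z e)}

variable {L : Language} {U : Type*} [L.Structure U] {A : Set U} {α : Type*}

namespace DefinableSetOver

lemma univ : DefinableSetOver L A (Set.univ : Set (α → U)) :=
  ⟨0, ⊤, Fin.elim0, fun i => i.elim0, by ext z; simp⟩

lemma compl {s : Set (α → U)} (hs : DefinableSetOver L A s) : DefinableSetOver L A sᶜ := by
  obtain ⟨r, θ, e, he, rfl⟩ := hs
  exact ⟨r, θ.not, e, he, by ext z; simp⟩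

lemma inter {s t : Set (α → U)} (hs : DefinableSetOver L A s) (ht : DefinableSetOver L A t) :
    DefinableSetOver L A (s ∩ t) := by
  obtain ⟨r₁, θ₁, e₁, he₁, rfl⟩ := hs
  obtain ⟨r₂, θ₂, e₂, he₂, rfl⟩ := ht
  refine ⟨r₁ + r₂,
    θ₁.relabel (Sum.map id (Fin.castAdd r₂)) ⊓ θ₂.relabel (Sum.map id (Fin.natAdd r₁)),
    Fin.append e₁ e₂, Fin.addCases (by simpa using he₁) (by simpa using he₂), ?_⟩
  ext z
  have h₁ : Sum.elim z (Fin.append e₁ e₂) ∘ Sum.map id (Fin.castAdd r₂) = Sum.elim z e₁ := by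
    ext (x | x) <;> simp
  have h₂ : Sum.elim z (Fin.append e₁ e₂) ∘ Sum.map id (Fin.natAdd r₁) = Sum.elim z e₂ := by
    ext (x | x) <;> simp
  simp only [Set.mem_inter_iff, Set.mem_ofPred_eq, Formula.realize_inf, Formula.realize_relabel,
    h₁, h₂]

lemma iInter {ι : Type*} [Finite ι] {s : ι → Set (α → U)}
    (hs : ∀ i, DefinableSetOver L A (s i)) : DefinableSetOver L A (⋂ i, s i) := by
  have := Fintype.ofFinite ι
  classical
  suffices h : ∀ t : Finset ι, DefinableSetOver L A (⋂ i ∈ t, s i) by simpa using h .univ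
  intro t
  induction t using Finset.induction_on with
  | empty => simpa using univ
  | insert i t _ ih => simpa only [Finset.set_biInter_insert] using (hs i).inter ih

lemma setOf_realize {n : ℕ} (ψ : L.Formula (Fin n ⊕ α)) {d : Fin n → U} (hd : ∀ i, d i ∈ A) :
    DefinableSetOver L A {w : α → U | ψ.Realize (Sum.elim d w)} := by
  refine ⟨n, ψ.relabel (Sum.elim Sum.inr Sum.inl), d, hd, ?_⟩
  ext w
  have h : Sum.elim w d ∘ (Sum.elim Sum.inr Sum.inl : Fin n ⊕ α → α ⊕ Fin n) = Sum.elim d w := by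
    ext (x | x) <;> rfl
  simp only [Set.mem_ofPred_eq, Formula.realize_relabel, h]

lemma setOf_realize_apply {r : ℕ} (φ : L.Formula (Fin 1 ⊕ Fin r)) {e : Fin r → U}
    (he : ∀ i, e i ∈ A) (i : α) :
    DefinableSetOver L A {z : α → U | φ.Realize (Sum.elim (fun _ => z i) e)} := by
  refine ⟨r, φ.relabel (Sum.map (fun _ => i) id), e, he, ?_⟩
  ext z
  have h : Sum.elim z e ∘ Sum.map (fun _ : Fin 1 => i) id = Sum.elim (fun _ => z i) e := by
    ext (x | x) <;> rfl
  simp only [Set.mem_ofPred_eq, Formula.realize_relabel, h]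

end DefinableSetOver

lemma exists_finite_definableSetOver_of_forall_inAcl [Finite α] {e : α → U}
    (he : ∀ i, InAcl L A (e i)) :
    ∃ s : Set (α → U), DefinableSetOver L A s ∧ e ∈ s ∧ s.Finite := by
  choose n φ c hc hsat hfin using he
  refine ⟨⋂ i, {z | (φ i).Realize (Sum.elim (fun _ => z i) (c i))},
    DefinableSetOver.iInter fun i => .setOf_realize_apply (φ i) (hc i) i,
    Set.mem_iInter.2 hsat, ?_⟩
  convert Set.Finite.pi (t := fun i => {x | Rz (L := L) (fun _ => x) (φ i) (c i)}) hfin using 1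
  ext z
  simp [Set.mem_pi, Rz]

lemma exists_minimal_definableSetOver {e : α → U} {s : Set (α → U)}
    (hs : DefinableSetOver L A s) (hes : e ∈ s) (hfin : s.Finite) :
    ∃ s₀ : Set (α → U), e ∈ s₀ ∧ DefinableSetOver L A s₀ ∧
      ∀ t, DefinableSetOver L A t → e ∈ t → s₀ ⊆ t := by
  let S := {t | t ⊆ s ∧ DefinableSetOver L A t ∧ e ∈ t}
  obtain ⟨s₀, ⟨hs₀s, hs₀, hes₀⟩, hmin⟩ :=
    (hfin.finite_subsets.subset fun _ ht => ht.1 : S.Finite).exists_minimal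
      ⟨s, subset_rfl, hs, hes⟩
  refine ⟨s₀, hes₀, hs₀, fun t ht het => ?_⟩
  have : s₀ ⊆ s₀ ∩ t :=
    hmin ⟨Set.inter_subset_left.trans hs₀s, hs₀.inter ht, hes₀, het⟩ Set.inter_subset_left
  exact this.trans Set.inter_subset_right

lemma realize_iff_exists_mem_of_minimal {e : α → U} {s₀ : Set (α → U)} (hes₀ : e ∈ s₀)
    (hmin : ∀ t, DefinableSetOver L A t → e ∈ t → s₀ ⊆ t) {n : ℕ}
    (ψ : L.Formula (Fin n ⊕ α)) {d : Fin n → U} (hd : ∀ i, d i ∈ A) :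
    ψ.Realize (Sum.elim d e) ↔ ∃ z ∈ s₀, ψ.Realize (Sum.elim d z) := by
  refine ⟨fun h => ⟨e, hes₀, h⟩, fun ⟨z, hz, hψz⟩ => ?_⟩
  by_contra hψe
  exact hmin _ (DefinableSetOver.setOf_realize ψ hd).compl hψe hz hψz

lemma exists_formula_realize_iff_of_forall_inAcl [Finite α] {e : α → U}
    (he : ∀ i, InAcl L A (e i)) {n : ℕ} (ψ : L.Formula (Fin n ⊕ α)) :
    ∃ (r : ℕ) (e₀ : Fin r → U), (∀ i, e₀ i ∈ A) ∧ ∃ χ : L.Formula (Fin n ⊕ Fin r),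
      ∀ d : Fin n → U, (∀ i, d i ∈ A) →
        (ψ.Realize (Sum.elim d e) ↔ χ.Realize (Sum.elim d e₀)) := by
  obtain ⟨s, hs, hes, hfin⟩ := exists_finite_definableSetOver_of_forall_inAcl he
  obtain ⟨s₀, hes₀, ⟨r, θ, e₀, he₀, rfl⟩, hmin⟩ := exists_minimal_definableSetOver hs hes hfin
  let χ : L.Formula ((Fin n ⊕ Fin r) ⊕ α) :=
    θ.relabel (Sum.elim Sum.inr (Sum.inl ∘ Sum.inr)) ⊓
      ψ.relabel (Sum.elim (Sum.inl ∘ Sum.inl) Sum.inr)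
  refine ⟨r, e₀, he₀, χ.iExs α, fun d hd => ?_⟩
  rw [realize_iff_exists_mem_of_minimal hes₀ hmin ψ hd, Formula.realize_iExs]
  refine exists_congr fun z => ?_
  have h₁ : Sum.elim (Sum.elim d e₀) z ∘ Sum.elim Sum.inr (Sum.inl ∘ Sum.inr) = Sum.elim z e₀ := by
    ext (x | x) <;> rfl
  have h₂ : Sum.elim (Sum.elim d e₀) z ∘ Sum.elim (Sum.inl ∘ Sum.inl) Sum.inr = Sum.elim d z := by
    ext (x | x) <;> rfl
  simp only [χ, Formula.realize_inf, Formula.realize_relabel, h₁, h₂, Set.mem_ofPred_eq]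

end Paper

open Paper in
theorem stmt_18_general {L : Language} {U : Type*} [L.Structure U]
    (A : Set U)
    {m : ℕ} (p : GType L U (Fin m))
    (hdef : DefinableOver {c | InAcl L A c} p) :
    ∀ {n : ℕ} (φ : L.Formula (Fin m ⊕ Fin n)),
      ∃ (j : ℕ) (e : Fin j → U), (∀ i, e i ∈ A) ∧
        ∃ ψ : L.Formula (Fin n ⊕ Fin j), ∀ d : Fin n → U, (∀ i, d i ∈ A) →
          (p.mem φ d ↔ ψ.Realize (Sum.elim d e)) := by
  intro n φ
  obtain ⟨j, e, he, ψ, hψ⟩ := hdef φ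
  obtain ⟨r, e₀, he₀, χ, hχ⟩ := exists_formula_realize_iff_of_forall_inAcl he ψ
  exact ⟨r, e₀, he₀, χ, fun d hd => (hψ d).trans (hχ d hd)⟩

open Paper in
/-- (T any complete theory) If a global type `p` is definable over
`acl(A)`, then its restriction `p|_A` is definable over `A`. -/
theorem stmt_18 {L : Language} {U : Type*} [L.Structure U]
    (A : Set U) (hmon : Monster L U A)
    {m : ℕ} (p : GType L U (Fin m))
    (hdef : DefinableOver {c | InAcl L A c} p) :
    ∀ {n : ℕ} (φ : L.Formula (Fin m ⊕ Fin n)),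
      ∃ (j : ℕ) (e : Fin j → U), (∀ i, e i ∈ A) ∧
        ∃ ψ : L.Formula (Fin n ⊕ Fin j), ∀ d : Fin n → U, (∀ i, d i ∈ A) →
          (p.mem φ d ↔ ψ.Realize (Sum.elim d e)) :=
  stmt_18_general A p hdef
end

section
/- Let T be a theory with definable Skolem functions, M ≺ N models, b a tuple such that tp(b/N) is definable over M, and p ∈ S_x(Mb) a complete type definable over Mb. Then p extends to a complete type q ∈ S_x(Nb) which is definable over Mb using the same definition scheme as p. -/
open FirstOrder FirstOrder.Language

namespace Paper

variable {L : Language} {U : Type*} [L.Structure U]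

/-- A complete type over the parameter set `A` in variables `γ`. -/
structure TypeOver (L : Language) (U : Type*) [L.Structure U] (A : Set U) (γ : Type*) where
  mem : ∀ {n : ℕ}, L.Formula (γ ⊕ Fin n) → (Fin n → U) → Prop
  complete : ∀ {n : ℕ} (φ : L.Formula (γ ⊕ Fin n)) (d : Fin n → U),
    (∀ i, d i ∈ A) → mem φ d ∨ mem φ.not d
  finSat : ∀ (s : List (Σ n : ℕ, L.Formula (γ ⊕ Fin n) × (Fin n → U))),
    (∀ x ∈ s, (∀ i, x.2.2 i ∈ A) ∧ mem x.2.1 x.2.2) →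
    ∃ a : γ → U, ∀ x ∈ s, Rz a x.2.1 x.2.2

/-- The theory has definable Skolem functions : every consistent formula `φ(x;y)` in
one variable `x` admits a `∅`-definable choice of a solution. -/
def HasDefSkolem (L : Language) (U : Type*) [L.Structure U] : Prop :=
  ∀ (n : ℕ) (φ : L.Formula (Fin 1 ⊕ Fin n)),
    ∃ ψ : L.Formula (Fin 1 ⊕ Fin n), ∀ e : Fin n → U,
      (∃ x : U, Rz (L := L) (fun _ => x) φ e) →
        ∃ x : U, Rz (fun _ => x) ψ e ∧ Rz (fun _ => x) φ e ∧
          ∀ x' : U, Rz (fun _ => x') ψ e → x' = x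

end Paper

/-!
The scheme `D` itself is the candidate for `q`: put `φ(x; d) ∈ q` iff `⊨ dφ(d)`. That `q` is
complete, and finitely satisfiable, at a given tuple `d` of parameters from `Nb` is one
first-order property `ψ(d)` with parameters from `Mb`, and `ψ` holds of every tuple from `Mb`
because `p` is a complete type defined by `D`. Definability of `tp(b/N)` over `M` makes it an heir
of `tp(b/M)`: if `θ(b, z)` (parameters from `M`) holds for some `z` in `N`, then `∃ z, dθ(z)`
holds in `U`, hence in `M ≺ U`, and a witness in `M` satisfies `θ(b, z)` again. Applied to `¬ψ`,
this carries `ψ` from `Mb` over to `Nb`.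
-/
namespace Paper

open Set

variable {L : Language} {U : Type*} [L.Structure U]

theorem _root_.FirstOrder.Language.ElementarySubstructure.exists_mem_of_realize
    (S : L.ElementarySubstructure U) {α β : Type*} [Finite β] (ψ : L.Formula (α ⊕ β))
    (v : α → U) (hv : ∀ i, v i ∈ S)
    (h : ∃ z : β → U, ψ.Realize (Sum.elim v z)) :
    ∃ z : β → U, (∀ i, z i ∈ S) ∧ ψ.Realize (Sum.elim v z) := by
  let vS : α → S := fun i => ⟨v i, hv i⟩
  have hU : (ψ.iExs β).Realize (S.subtype ∘ vS) := Formula.realize_iExs.2 h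
  obtain ⟨z, hz⟩ := Formula.realize_iExs.1 ((S.subtype.map_formula _ _).1 hU)
  refine ⟨S.subtype ∘ z, fun i => (z i).2, ?_⟩
  rw [← S.subtype.map_formula, Sum.comp_elim] at hz
  exact hz

theorem exists_sumElim_comp_eq {kb : ℕ} (A : Set U) (b : Fin kb → U) {β : Type*} (d : β → U)
    (hd : ∀ i, d i ∈ A ∪ range b) :
    ∃ σ : β → Fin kb ⊕ {i // d i ∈ A}, Sum.elim b (fun j : {i // d i ∈ A} => d j) ∘ σ = d := by
  have h : ∀ i, ∃ s : Fin kb ⊕ {i // d i ∈ A}, Sum.elim b (fun j : {i // d i ∈ A} => d j) s = d i :=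
    fun i => (hd i).elim (fun hA => ⟨Sum.inr ⟨i, hA⟩, rfl⟩) fun ⟨t, ht⟩ => ⟨Sum.inl t, ht⟩
  choose σ hσ using h
  exact ⟨σ, funext hσ⟩

theorem sumElim_mem_union_range {kb : ℕ} {A : Set U} (b : Fin kb → U) {γ : Type*} {z : γ → U}
    (hz : ∀ i, z i ∈ A) : ∀ x, Sum.elim b z x ∈ A ∪ range b
  | .inl t => Or.inr ⟨t, rfl⟩
  | .inr t => Or.inl (hz t)

section Heir

variable {M N : L.ElementarySubstructure U} {kb : ℕ} {b : Fin kb → U}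
  (hbdef : ∀ {n : ℕ} (φ : L.Formula (Fin kb ⊕ Fin n)),
    ∃ (j : ℕ) (e : Fin j → U), (∀ i, e i ∈ M) ∧
      ∃ dφ : L.Formula (Fin n ⊕ Fin j), ∀ d : Fin n → U, (∀ i, d i ∈ N) →
        (Rz b φ d ↔ dφ.Realize (Sum.elim d e)))
include hbdef

theorem exists_defining_formula {δ : Type*} [Finite δ] (φ : L.Formula (Fin kb ⊕ δ)) :
    ∃ (j : ℕ) (e : Fin j → U), (∀ i, e i ∈ M) ∧
      ∃ dφ : L.Formula (δ ⊕ Fin j), ∀ d : δ → U, (∀ i, d i ∈ N) →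
        (φ.Realize (Sum.elim b d) ↔ dφ.Realize (Sum.elim d e)) := by
  let σ := Finite.equivFin δ
  obtain ⟨j, e, he, dφ, hdφ⟩ := hbdef (φ.relabel (Sum.map id σ))
  refine ⟨j, e, he, dφ.relabel (Sum.map σ.symm id), fun d hd => ?_⟩
  have h := hdφ (d ∘ σ.symm) fun i => hd _
  simp only [Rz, Formula.realize_relabel, Sum.elim_comp_map, Function.comp_id,
    Function.comp_assoc, Equiv.symm_comp_self] at h
  simpa only [Formula.realize_relabel, Sum.elim_comp_map, Function.comp_id] using h

theorem exists_mem_and_realize_of_realize (hMN : (M : Set U) ⊆ N) {γ β : Type} [Finite γ]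
    [Finite β] (θ : L.Formula (Fin kb ⊕ (γ ⊕ β))) (w : γ → U) (hw : ∀ i, w i ∈ M)
    (z : β → U) (hz : ∀ i, z i ∈ N) (h : θ.Realize (Sum.elim b (Sum.elim w z))) :
    ∃ z' : β → U, (∀ i, z' i ∈ M) ∧ θ.Realize (Sum.elim b (Sum.elim w z')) := by
  obtain ⟨j, e, he, dθ, hdθ⟩ := exists_defining_formula hbdef θ
  let ψ : L.Formula ((γ ⊕ Fin j) ⊕ β) :=
    dθ.relabel (Sum.elim (Sum.elim (Sum.inl ∘ Sum.inl) Sum.inr) (Sum.inl ∘ Sum.inr))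
  have hψ : ∀ z' : β → U,
      ψ.Realize (Sum.elim (Sum.elim w e) z') ↔ dθ.Realize (Sum.elim (Sum.elim w z') e) := by
    intro z'
    rw [Formula.realize_relabel]
    congr! 1
    funext x
    rcases x with (_ | _) | _ <;> rfl
  have hwe : ∀ i, Sum.elim w e i ∈ M := by
    rintro (i | i)
    exacts [hw i, he i]
  have hwN : ∀ z' : β → U, (∀ i, z' i ∈ N) → ∀ i, Sum.elim w z' i ∈ N := by
    rintro z' hz' (i | i)
    exacts [hMN (hw i), hz' i]
  obtain ⟨z', hz'M, hz'⟩ :=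
    M.exists_mem_of_realize ψ _ hwe ⟨z, (hψ z).2 ((hdθ _ (hwN z hz)).1 h)⟩
  exact ⟨z', hz'M, (hdθ _ (hwN z' fun i => hMN (hz'M i))).2 ((hψ z').1 hz')⟩

theorem realize_of_forall_mem_union_range (hMN : (M : Set U) ⊆ N) {β α : Type} [Finite β]
    [Finite α] (ψ : L.Formula (β ⊕ α)) (e : α → U) (he : ∀ i, e i ∈ (M : Set U) ∪ range b)
    (hψ : ∀ d : β → U, (∀ i, d i ∈ (M : Set U) ∪ range b) → ψ.Realize (Sum.elim d e))
    (d : β → U) (hd : ∀ i, d i ∈ (N : Set U) ∪ range b) : ψ.Realize (Sum.elim d e) := by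
  obtain ⟨σe, hσe⟩ := exists_sumElim_comp_eq (M : Set U) b e he
  obtain ⟨σd, hσd⟩ := exists_sumElim_comp_eq (N : Set U) b d hd
  let θ : L.Formula (Fin kb ⊕ ({i // e i ∈ (M : Set U)} ⊕ {i // d i ∈ (N : Set U)})) :=
    ∼(ψ.relabel (Sum.elim (Sum.map id Sum.inr ∘ σd) (Sum.map id Sum.inl ∘ σe)))
  have hθ : ∀ z : {i // d i ∈ (N : Set U)} → U,
      θ.Realize (Sum.elim b (Sum.elim (fun i => e i) z)) ↔
        ¬ ψ.Realize (Sum.elim (Sum.elim b z ∘ σd) e) := by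
    intro z
    simp only [θ, Formula.realize_not, Formula.realize_relabel, Sum.comp_elim,
      ← Function.comp_assoc, Sum.elim_comp_map, Function.comp_id, Sum.elim_comp_inl,
      Sum.elim_comp_inr]
    rw [hσe]
  by_contra h
  obtain ⟨z, hzM, hz⟩ := exists_mem_and_realize_of_realize hbdef hMN θ _ (fun i => i.2) _
    (fun i => i.2) ((hθ _).2 (by rwa [hσd]))
  exact (hθ z).1 hz (hψ _ fun i => sumElim_mem_union_range b hzM (σd i))

section Scheme

variable (hMN : (M : Set U) ⊆ N) {kx : ℕ} (p : TypeOver L U ((M : Set U) ∪ range b) (Fin kx))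
  (D : ∀ {n : ℕ}, L.Formula (Fin kx ⊕ Fin n) →
    (Σ j : ℕ, L.Formula (Fin n ⊕ Fin j) × (Fin j → U)))
  (hD : ∀ {n : ℕ} (φ : L.Formula (Fin kx ⊕ Fin n)) (i : Fin (D φ).1),
    (D φ).2.2 i ∈ (M : Set U) ∪ range b)
  (hDp : ∀ {n : ℕ} (φ : L.Formula (Fin kx ⊕ Fin n)) (d : Fin n → U),
    (∀ i, d i ∈ ((M : Set U) ∪ range b)) →
    (p.mem φ d ↔ (D φ).2.1.Realize (Sum.elim d (D φ).2.2)))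
include hMN hD hDp

theorem scheme_realize_or_realize_not {n : ℕ} (φ : L.Formula (Fin kx ⊕ Fin n)) (d : Fin n → U)
    (hd : ∀ i, d i ∈ (N : Set U) ∪ range b) :
    (D φ).2.1.Realize (Sum.elim d (D φ).2.2) ∨
      (D φ.not).2.1.Realize (Sum.elim d (D φ.not).2.2) := by
  let ψ : L.Formula (Fin n ⊕ (Fin (D φ).1 ⊕ Fin (D φ.not).1)) :=
    (D φ).2.1.relabel (Sum.map id Sum.inl) ⊔ (D φ.not).2.1.relabel (Sum.map id Sum.inr)
  have hψ : ∀ d', ψ.Realize (Sum.elim d' (Sum.elim (D φ).2.2 (D φ.not).2.2)) ↔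
      ((D φ).2.1.Realize (Sum.elim d' (D φ).2.2) ∨
        (D φ.not).2.1.Realize (Sum.elim d' (D φ.not).2.2)) := by
    intro d'
    simp only [ψ, Formula.realize_sup, Formula.realize_relabel, Sum.elim_comp_map,
      Function.comp_id, Sum.elim_comp_inl, Sum.elim_comp_inr]
  have he : ∀ i, Sum.elim (D φ).2.2 (D φ.not).2.2 i ∈ (M : Set U) ∪ range b := by
    rintro (i | i)
    exacts [hD φ i, hD φ.not i]
  refine (hψ d).1 (realize_of_forall_mem_union_range hbdef hMN ψ _ he
    (fun d' hd' => (hψ d').2 ?_) d hd)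
  exact (p.complete φ d' hd').imp (hDp φ d' hd').1 (hDp φ.not d' hd').1

theorem scheme_finSat (s : List (Σ n : ℕ, L.Formula (Fin kx ⊕ Fin n) × (Fin n → U)))
    (hs : ∀ x ∈ s, (∀ i, x.2.2 i ∈ (N : Set U) ∪ range b) ∧
      (D x.2.1).2.1.Realize (Sum.elim x.2.2 (D x.2.1).2.2)) :
    ∃ a : Fin kx → U, ∀ x ∈ s, Rz a x.2.1 x.2.2 := by
  let F := s.get
  let e : (Σ i, Fin (D (F i).2.1).1) → U := fun x => (D (F x.1).2.1).2.2 x.2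
  let ψ : L.Formula ((Σ i, Fin (F i).1) ⊕ (Σ i, Fin (D (F i).2.1).1)) :=
    (Formula.iInf fun i => (D (F i).2.1).2.1.relabel (Sum.map (Sigma.mk i) (Sigma.mk i))).imp
      (Formula.iExs (Fin kx) (Formula.iInf fun i =>
        (F i).2.1.relabel (Sum.elim Sum.inr (Sum.inl ∘ Sum.inl ∘ Sigma.mk i))))
  have hψ : ∀ d : (Σ i, Fin (F i).1) → U, ψ.Realize (Sum.elim d e) ↔
      ((∀ i, (D (F i).2.1).2.1.Realize (Sum.elim (fun t => d ⟨i, t⟩) (D (F i).2.1).2.2)) →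
        ∃ a, ∀ i, Rz a (F i).2.1 (fun t => d ⟨i, t⟩)) := by
    intro d
    simp only [ψ, Formula.realize_imp, Formula.realize_iInf, Formula.realize_iExs,
      Formula.realize_relabel, Sum.elim_comp_map, Sum.comp_elim, Sum.elim_comp_inr,
      ← Function.comp_assoc, Sum.elim_comp_inl, Rz]
    rfl
  have hMb : ∀ d', (∀ x, d' x ∈ (M : Set U) ∪ range b) → ψ.Realize (Sum.elim d' e) := by
    intro d' hd'
    refine (hψ d').2 fun hDd' => ?_
    obtain ⟨a, ha⟩ := p.finSat (List.ofFn fun i => ⟨_, (F i).2.1, fun t => d' ⟨i, t⟩⟩) <| by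
      rintro _ hx
      obtain ⟨i, rfl⟩ := List.mem_ofFn.1 hx
      exact ⟨fun t => hd' _, (hDp _ _ fun t => hd' _).2 (hDd' i)⟩
    exact ⟨a, fun i => ha _ (List.mem_ofFn.2 ⟨i, rfl⟩)⟩
  obtain ⟨a, ha⟩ := (hψ _).1
    (realize_of_forall_mem_union_range hbdef hMN ψ e (fun x => hD _ x.2) hMb _
      fun x => (hs _ (s.get_mem x.1)).1 x.2)
    fun i => (hs _ (s.get_mem i)).2
  refine ⟨a, fun x hx => ?_⟩
  obtain ⟨i, rfl⟩ := List.mem_iff_get.1 hx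
  exact ha i

end Scheme

end Heir

end Paper

open Paper in
theorem stmt_19_general {L : Language} {U : Type*} [L.Structure U]
    (M N : L.ElementarySubstructure U) (hMN : (M : Set U) ⊆ (N : Set U))
    {kb kx : ℕ} (b : Fin kb → U)
    (hbdef : ∀ {n : ℕ} (φ : L.Formula (Fin kb ⊕ Fin n)),
      ∃ (j : ℕ) (e : Fin j → U), (∀ i, e i ∈ M) ∧
        ∃ dφ : L.Formula (Fin n ⊕ Fin j), ∀ d : Fin n → U, (∀ i, d i ∈ N) →
          (Rz b φ d ↔ dφ.Realize (Sum.elim d e)))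
    (p : TypeOver L U ((M : Set U) ∪ Set.range b) (Fin kx))
    (D : ∀ {n : ℕ}, L.Formula (Fin kx ⊕ Fin n) →
      (Σ j : ℕ, L.Formula (Fin n ⊕ Fin j) × (Fin j → U)))
    (hD : ∀ {n : ℕ} (φ : L.Formula (Fin kx ⊕ Fin n)) (i : Fin (D φ).1),
      (D φ).2.2 i ∈ (M : Set U) ∪ Set.range b)
    (hDp : ∀ {n : ℕ} (φ : L.Formula (Fin kx ⊕ Fin n)) (d : Fin n → U),
      (∀ i, d i ∈ ((M : Set U) ∪ Set.range b)) →
      (p.mem φ d ↔ (D φ).2.1.Realize (Sum.elim d (D φ).2.2))) :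
    ∃ q : TypeOver L U ((N : Set U) ∪ Set.range b) (Fin kx),
      (∀ {n : ℕ} (φ : L.Formula (Fin kx ⊕ Fin n)) (d : Fin n → U),
        (∀ i, d i ∈ ((M : Set U) ∪ Set.range b)) → (p.mem φ d ↔ q.mem φ d)) ∧
      (∀ {n : ℕ} (φ : L.Formula (Fin kx ⊕ Fin n)) (d : Fin n → U),
        (∀ i, d i ∈ ((N : Set U) ∪ Set.range b)) →
        (q.mem φ d ↔ (D φ).2.1.Realize (Sum.elim d (D φ).2.2))) :=
  ⟨⟨fun φ d => (D φ).2.1.Realize (Sum.elim d (D φ).2.2),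
      fun φ d hd => scheme_realize_or_realize_not hbdef hMN p D hD hDp φ d hd,
      scheme_finSat hbdef hMN p D hD hDp⟩,
    fun φ d hd => hDp φ d hd, fun _ _ _ => Iff.rfl⟩

open Paper in
/-- (T with definable Skolem functions) Let `M ≺ N`, `b` a tuple with
`tp(b/N)` definable over `M`, and `p ∈ S_x(Mb)` a complete type definable over `Mb` via
the scheme `D`. Then `p` extends to a complete type `q ∈ S_x(Nb)` definable over `Mb`
by the same scheme `D`. -/
theorem stmt_19 {L : Language} {U : Type*} [L.Structure U]
    (hsk : HasDefSkolem L U)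
    (M N : L.ElementarySubstructure U) (hMN : (M : Set U) ⊆ (N : Set U))
    {kb kx : ℕ} (b : Fin kb → U)
    (hbdef : ∀ {n : ℕ} (φ : L.Formula (Fin kb ⊕ Fin n)),
      ∃ (j : ℕ) (e : Fin j → U), (∀ i, e i ∈ M) ∧
        ∃ dφ : L.Formula (Fin n ⊕ Fin j), ∀ d : Fin n → U, (∀ i, d i ∈ N) →
          (Rz b φ d ↔ dφ.Realize (Sum.elim d e)))
    (p : TypeOver L U ((M : Set U) ∪ Set.range b) (Fin kx))
    (D : ∀ {n : ℕ}, L.Formula (Fin kx ⊕ Fin n) →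
      (Σ j : ℕ, L.Formula (Fin n ⊕ Fin j) × (Fin j → U)))
    (hD : ∀ {n : ℕ} (φ : L.Formula (Fin kx ⊕ Fin n)) (i : Fin (D φ).1),
      (D φ).2.2 i ∈ (M : Set U) ∪ Set.range b)
    (hDp : ∀ {n : ℕ} (φ : L.Formula (Fin kx ⊕ Fin n)) (d : Fin n → U),
      (∀ i, d i ∈ ((M : Set U) ∪ Set.range b)) →
      (p.mem φ d ↔ (D φ).2.1.Realize (Sum.elim d (D φ).2.2))) :
    ∃ q : TypeOver L U ((N : Set U) ∪ Set.range b) (Fin kx),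
      (∀ {n : ℕ} (φ : L.Formula (Fin kx ⊕ Fin n)) (d : Fin n → U),
        (∀ i, d i ∈ ((M : Set U) ∪ Set.range b)) → (p.mem φ d ↔ q.mem φ d)) ∧
      (∀ {n : ℕ} (φ : L.Formula (Fin kx ⊕ Fin n)) (d : Fin n → U),
        (∀ i, d i ∈ ((N : Set U) ∪ Set.range b)) →
        (q.mem φ d ↔ (D φ).2.1.Realize (Sum.elim d (D φ).2.2))) :=
  stmt_19_general M N hMN b hbdef p D hD hDp
end
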